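/- arXiv:2504.19913 — 4 statements merged into one kernel-verified Lean document; each statement's English description precedes it below -/
import Mathlib

section
/- For any probability mass function P on a finite set 𝒳 and any γ ≥ 0, the quantity H_γ(P) = log(∑_{x∈𝒳} P(x)^((1-P(x))^γ)) is non-decreasing in γ. -/
open Finset

/-- For a pmf `P` on a finite set, `H_γ(P) = log₂ (∑ x, P x ^ ((1 - P x)^γ))`
is non-decreasing in `γ` on `[0,∞)`. -/
theorem Hgamma_monotone {𝒳 : Type*} [Fintype 𝒳] (P : 𝒳 → ℝ)
    (hP0 : ∀ x, 0 ≤ P x) (hP1 : ∑ x, P x = 1)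
    (γ₁ γ₂ : ℝ) (hγ₁ : 0 ≤ γ₁) (hγ : γ₁ ≤ γ₂) :
    Real.logb 2 (∑ x, P x ^ ((1 - P x) ^ γ₁)) ≤
      Real.logb 2 (∑ x, P x ^ ((1 - P x) ^ γ₂)) := by
  have hP1' : ∀ x, P x ≤ 1 := by
    intro x
    calc P x ≤ ∑ y, P y := Finset.single_le_sum (fun y _ => hP0 y) (Finset.mem_univ x)
    _ = 1 := hP1
  -- termwise lower bound: P x ≤ P x ^ ((1 - P x)^γ₁)
  have hlow : ∀ x, P x ≤ P x ^ ((1 - P x) ^ γ₁) := by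
    intro x
    rcases eq_or_lt_of_le (hP0 x) with h0 | h0
    · rw [← h0]
      positivity
    · have he : (1 - P x) ^ γ₁ ≤ 1 :=
        Real.rpow_le_one (by linarith [hP1' x]) (by linarith [hP0 x]) hγ₁
      calc P x = P x ^ (1 : ℝ) := (Real.rpow_one _).symm
      _ ≤ P x ^ ((1 - P x) ^ γ₁) := Real.rpow_le_rpow_of_exponent_ge h0 (hP1' x) he
  have hpos : (0 : ℝ) < ∑ x, P x ^ ((1 - P x) ^ γ₁) := by
    calc (0:ℝ) < 1 := one_pos
    _ = ∑ x, P x := hP1.symm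
    _ ≤ ∑ x, P x ^ ((1 - P x) ^ γ₁) := Finset.sum_le_sum fun x _ => hlow x
  have hterm : ∀ x, P x ^ ((1 - P x) ^ γ₁) ≤ P x ^ ((1 - P x) ^ γ₂) := by
    intro x
    rcases eq_or_lt_of_le (hP0 x) with h0 | h0
    · rw [← h0]
      simp only [sub_zero, Real.one_rpow]; exact le_refl _
    · rcases eq_or_lt_of_le (hP1' x) with h1 | h1
      · rw [h1]; simp
      · have hb0 : (0:ℝ) < 1 - P x := by linarith
        have hb1 : (1:ℝ) - P x ≤ 1 := by linarith
        exact Real.rpow_le_rpow_of_exponent_ge h0 (hP1' x)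
          (Real.rpow_le_rpow_of_exponent_ge hb0 hb1 hγ)
  exact Real.logb_le_logb_of_le (by norm_num) hpos (Finset.sum_le_sum fun x _ => hterm x)
end

section
/- For any γ ≥ 0, any integer d ≥ 1 and any p ∈ [0,1]: p^((1-p)^γ) + d·((1-p)/d)^((1 - (1-p)/d)^γ) ≤ 1 + e^(max(1,γ)/e). -/
lemma bernoulli_aux {q γ : ℝ} (hq0 : 0 ≤ q) (hq1 : q ≤ 1) (hγ : 0 ≤ γ) :
    1 - (1 - q) ^ γ ≤ max 1 γ * q := by
  rcases le_or_gt 1 γ with h | h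
  · rw [max_eq_right h]
    have := one_add_mul_self_le_rpow_one_add (s := -q) (by linarith) h
    have h2 : (1 : ℝ) + -q = 1 - q := by ring
    rw [h2] at this
    nlinarith
  · rw [max_eq_left h.le]
    rcases eq_or_lt_of_le hq1 with rfl | hq1'
    · have : (0:ℝ) ≤ (1 - 1 : ℝ) ^ γ := Real.rpow_nonneg (by norm_num) _
      linarith
    · have hx : (0:ℝ) < 1 - q := by linarith
      have := Real.rpow_le_rpow_of_exponent_ge hx (by linarith) h.le
      rw [Real.rpow_one] at this
      linarith

/-- For `γ ≥ 0`, integer `d ≥ 1` and `p ∈ [0,1]`,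
`p^((1-p)^γ) + d · ((1-p)/d)^((1 - (1-p)/d)^γ) ≤ 1 + e^(max(1,γ)/e)`. -/
theorem focal_sum_bound (γ p : ℝ) (d : ℕ)
    (hγ : 0 ≤ γ) (hp0 : 0 ≤ p) (hp1 : p ≤ 1) (hd : 1 ≤ d) :
    p ^ ((1 - p) ^ γ) +
      (d : ℝ) * ((1 - p) / (d : ℝ)) ^ ((1 - (1 - p) / (d : ℝ)) ^ γ) ≤
      1 + Real.exp (max 1 γ / Real.exp 1) := by
  set D : ℝ := (d : ℝ) with hDdef
  have hD1 : (1:ℝ) ≤ D := by rw [hDdef]; exact_mod_cast hd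
  have hD0 : (0:ℝ) < D := by linarith
  set M : ℝ := max 1 γ with hMdef
  have hM1 : (1:ℝ) ≤ M := le_max_left _ _
  have hM0 : (0:ℝ) < M := by linarith
  -- first term ≤ 1
  have h1p0 : (0:ℝ) ≤ 1 - p := by linarith
  have hexp1 : 0 ≤ (1 - p) ^ γ := Real.rpow_nonneg h1p0 _
  have term1 : p ^ ((1 - p) ^ γ) ≤ 1 := Real.rpow_le_one hp0 hp1 hexp1
  -- second term
  set q : ℝ := (1 - p) / D with hqdef
  have hq0 : 0 ≤ q := div_nonneg h1p0 hD0.le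
  have hq1 : q ≤ 1 := by
    rw [hqdef, div_le_one hD0]; linarith
  set E : ℝ := (1 - q) ^ γ with hEdef
  have hE0 : 0 ≤ E := Real.rpow_nonneg (by linarith) _
  have hber : 1 - E ≤ M * q := bernoulli_aux hq0 hq1 hγ
  -- rewrite D * q ^ E = D^(1-E) * (1-p)^E
  have hsplit : D * q ^ E = D ^ (1 - E) * (1 - p) ^ E := by
    rw [hqdef, Real.div_rpow h1p0 hD0.le, Real.rpow_sub hD0, Real.rpow_one]
    field_simp
  have hb1 : (1 - p) ^ E ≤ 1 := Real.rpow_le_one h1p0 (by linarith) hE0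
  have hb2 : D ^ (1 - E) ≤ D ^ (M / D) := by
    apply Real.rpow_le_rpow_of_exponent_le hD1
    calc 1 - E ≤ M * q := hber
      _ = M * (1 - p) / D := by rw [hqdef]; ring
      _ ≤ M / D := by
        gcongr ?_ / D
        nlinarith
  have hlog : Real.log D ≤ D / Real.exp 1 := by
    have he : (0:ℝ) < Real.exp 1 := Real.exp_pos 1
    have h3 : Real.log (D / Real.exp 1) ≤ D / Real.exp 1 - 1 :=
      Real.log_le_sub_one_of_pos (div_pos hD0 he)
    rw [Real.log_div (by linarith) he.ne', Real.log_exp] at h3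
    linarith
  have hb3 : D ^ (M / D) ≤ Real.exp (M / Real.exp 1) := by
    rw [Real.rpow_def_of_pos hD0]
    apply Real.exp_le_exp.mpr
    calc Real.log D * (M / D) = M * (Real.log D / D) := by ring
      _ ≤ M * (1 / Real.exp 1) := by
        apply mul_le_mul_of_nonneg_left ?_ hM0.le
        rw [div_le_div_iff₀ hD0 (Real.exp_pos 1)]
        calc Real.log D * Real.exp 1 = Real.log D * Real.exp 1 := rfl
          _ ≤ (D / Real.exp 1) * Real.exp 1 :=
            mul_le_mul_of_nonneg_right hlog (Real.exp_pos 1).le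
          _ = 1 * D := by field_simp
      _ = M / Real.exp 1 := by ring
  have term2 : D * q ^ E ≤ Real.exp (M / Real.exp 1) := by
    rw [hsplit]
    calc D ^ (1 - E) * (1 - p) ^ E ≤ D ^ (1 - E) * 1 :=
          mul_le_mul_of_nonneg_left hb1 (Real.rpow_nonneg hD0.le _)
      _ = D ^ (1 - E) := mul_one _
      _ ≤ D ^ (M / D) := hb2
      _ ≤ Real.exp (M / Real.exp 1) := hb3
  linarith [term1, term2]
end

section
/- For any finite set 𝒳 with |𝒳| ≥ 2 and γ ≥ 0, the maximum over probability mass functions P on 𝒳 of H_γ(P) = log₂(∑_x P(x)^((1-P(x))^γ)) is at most log₂(1 + e^(max(1,γ)/e)). -/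
open Finset

private lemma key_term_bound (γ : ℝ) (hγ : 0 ≤ γ) (p : ℝ) (hp0 : 0 ≤ p) (hp1 : p ≤ 1) :
    p ^ ((1 - p) ^ γ) ≤ p * Real.exp (max 1 γ / Real.exp 1) := by
  have he : (0:ℝ) < Real.exp 1 := Real.exp_pos 1
  have hM1 : (1:ℝ) ≤ max 1 γ := le_max_left _ _
  have hMe : 0 ≤ max 1 γ / Real.exp 1 := by positivity
  rcases eq_or_lt_of_le hp0 with h0 | h0
  · -- p = 0
    rw [← h0]
    simp [Real.one_rpow, Real.rpow_one]
  rcases eq_or_lt_of_le hp1 with h1 | h1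
  · -- p = 1
    rw [h1]
    rw [Real.one_rpow]
    have := Real.one_le_exp hMe
    linarith
  -- 0 < p < 1
  have hs0 : 0 < 1 - p := by linarith
  have hstep : 1 - (1 - p) ^ γ ≤ max 1 γ * p := by
    rcases le_total γ 1 with hg | hg
    · have : (1 - p) ^ (1:ℝ) ≤ (1 - p) ^ γ :=
        Real.rpow_le_rpow_of_exponent_ge hs0 (by linarith) hg
      rw [Real.rpow_one] at this
      nlinarith [le_max_left (1:ℝ) γ]
    · have hb : 1 + γ * (-p) ≤ (1 + (-p)) ^ γ :=
        one_add_mul_self_le_rpow_one_add (by linarith) hg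
      have hmax : max 1 γ = γ := max_eq_right hg
      rw [hmax]
      have : (1:ℝ) + (-p) = 1 - p := by ring
      rw [this] at hb
      linarith
  have hE1 : (1 - p) ^ γ ≤ 1 := Real.rpow_le_one (le_of_lt hs0) (by linarith) hγ
  have hE0 : 0 ≤ (1 - p) ^ γ := Real.rpow_nonneg (le_of_lt hs0) γ
  -- log bound : log (1/p) ≤ 1 / (e * p)
  have hlog : Real.log (1 / p) ≤ 1 / (Real.exp 1 * p) := by
    have h := Real.add_one_le_exp (Real.log (1 / p) - 1)
    have hexp : Real.exp (Real.log (1 / p) - 1) = 1 / (Real.exp 1 * p) := by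
      rw [Real.exp_sub, Real.exp_log (by positivity)]
      field_simp
    rw [hexp] at h
    linarith
  have hlogn : 0 ≤ Real.log (1 / p) := Real.log_nonneg (by
    rw [le_div_iff₀ h0]; linarith)
  have hlogp : Real.log (1 / p) = - Real.log p := by
    rw [one_div, Real.log_inv]
  -- main exponent inequality
  have hmain : (1 - p) ^ γ * Real.log p ≤ Real.log p + max 1 γ / Real.exp 1 := by
    have h1 : (1 - (1 - p) ^ γ) * Real.log (1 / p) ≤ (max 1 γ * p) * Real.log (1 / p) :=
      mul_le_mul_of_nonneg_right hstep hlogn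
    have h2 : (max 1 γ * p) * Real.log (1 / p) ≤ (max 1 γ * p) * (1 / (Real.exp 1 * p)) := by
      apply mul_le_mul_of_nonneg_left hlog
      positivity
    have h3 : (max 1 γ * p) * (1 / (Real.exp 1 * p)) = max 1 γ / Real.exp 1 := by
      field_simp
    rw [hlogp] at h1
    nlinarith
  calc p ^ ((1 - p) ^ γ) = Real.exp ((1 - p) ^ γ * Real.log p) := by
        rw [Real.rpow_def_of_pos h0]; ring_nf
    _ ≤ Real.exp (Real.log p + max 1 γ / Real.exp 1) := Real.exp_le_exp.mpr hmain
    _ = p * Real.exp (max 1 γ / Real.exp 1) := by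
        rw [Real.exp_add, Real.exp_log h0]

/-- For any finite set `𝒳` with `|𝒳| ≥ 2` and `γ ≥ 0`, every pmf `P` on `𝒳`
satisfies `H_γ(P) = log₂ (∑ x, P x ^ ((1 - P x)^γ)) ≤ log₂(1 + e^(max(1,γ)/e))`. -/
theorem Hgamma_max_bound {𝒳 : Type*} [Fintype 𝒳]
    (hcard : 2 ≤ Fintype.card 𝒳) (γ : ℝ) (hγ : 0 ≤ γ)
    (P : 𝒳 → ℝ) (hP0 : ∀ x, 0 ≤ P x) (hP1 : ∑ x, P x = 1) :
    Real.logb 2 (∑ x, P x ^ ((1 - P x) ^ γ)) ≤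
      Real.logb 2 (1 + Real.exp (max 1 γ / Real.exp 1)) := by
  have hPle1 : ∀ x, P x ≤ 1 := by
    intro x
    calc P x ≤ ∑ y, P y := Finset.single_le_sum (fun y _ => hP0 y) (mem_univ x)
    _ = 1 := hP1
  have hsum : (∑ x, P x ^ ((1 - P x) ^ γ)) ≤ 1 + Real.exp (max 1 γ / Real.exp 1) := by
    calc (∑ x, P x ^ ((1 - P x) ^ γ))
        ≤ ∑ x, P x * Real.exp (max 1 γ / Real.exp 1) := by
          apply Finset.sum_le_sum
          intro x _
          exact key_term_bound γ hγ (P x) (hP0 x) (hPle1 x)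
      _ = Real.exp (max 1 γ / Real.exp 1) := by
          rw [← Finset.sum_mul, hP1, one_mul]
      _ ≤ 1 + Real.exp (max 1 γ / Real.exp 1) := by linarith
  -- positivity of the sum
  have hx : ∃ x : 𝒳, 0 < P x := by
    by_contra h
    push_neg at h
    have : ∀ x, P x = 0 := fun x => le_antisymm (h x) (hP0 x)
    simp [this] at hP1
  obtain ⟨x, hxpos⟩ := hx
  have hpos : 0 < ∑ y, P y ^ ((1 - P y) ^ γ) := by
    apply Finset.sum_pos'
    · intro y _
      exact Real.rpow_nonneg (hP0 y) _
    · exact ⟨x, mem_univ x, Real.rpow_pos_of_pos hxpos _⟩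
  exact Real.logb_le_logb_of_le (by norm_num) hpos hsum
end

section
/- Let X be a random variable on a finite set 𝒳 with pmf R, let P̂ be a probability mass function on 𝒳 with P̂(x) > 0 for all x in the support of R, and let γ ≥ 0. Then ∑_x R(x)·(1-P̂(x))^γ·log₂(1/P̂(x)) ≥ H(R) - log₂(∑_x P̂(x)^((1-P̂(x))^γ)), where H(R) is the Shannon entropy of R. -/
open Finset

/-- Key converse step: for a source pmf `R`, a reconstruction pmf `P̂` positive
on the support of `R`, and `γ ≥ 0`, the expected focal loss is at least
`H(R) - log₂(∑ x, P̂ x ^ ((1 - P̂ x)^γ))`. -/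
theorem focal_loss_entropy_bound {𝒳 : Type*} [Fintype 𝒳] (R Phat : 𝒳 → ℝ)
    (hR0 : ∀ x, 0 ≤ R x) (hR1 : ∑ x, R x = 1)
    (hP0 : ∀ x, 0 ≤ Phat x) (hP1 : ∑ x, Phat x = 1)
    (hpos : ∀ x, 0 < R x → 0 < Phat x) (γ : ℝ) (hγ : 0 ≤ γ) :
    (-∑ x, R x * Real.logb 2 (R x)) -
        Real.logb 2 (∑ x, Phat x ^ ((1 - Phat x) ^ γ)) ≤
      ∑ x, R x * (1 - Phat x) ^ γ * Real.logb 2 (1 / Phat x) := by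
  set P : 𝒳 → ℝ := fun x => Phat x ^ ((1 - Phat x) ^ γ) with hPdef
  have hPnn : ∀ x, 0 ≤ P x := fun x => Real.rpow_nonneg (hP0 x) _
  set c : ℝ := ∑ x, P x with hc
  -- c > 0
  have hex : ∃ x, 0 < R x := by
    by_contra h
    push_neg at h
    have : ∑ x, R x = 0 := Finset.sum_eq_zero fun x _ => le_antisymm (h x) (hR0 x)
    rw [hR1] at this; norm_num at this
  obtain ⟨x0, hx0⟩ := hex
  have hcpos : 0 < c := by
    apply Finset.sum_pos' (fun x _ => hPnn x) ⟨x0, Finset.mem_univ x0, ?_⟩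
    exact Real.rpow_pos_of_pos (hpos x0 hx0) _
  have hlog2 : (0:ℝ) < Real.log 2 := Real.log_pos (by norm_num)
  -- key Gibbs-type inequality
  have key : ∑ x, R x * Real.logb 2 (P x / (c * R x)) ≤ 0 := by
    have hpt : ∀ x ∈ Finset.univ, R x * Real.logb 2 (P x / (c * R x)) ≤
        (P x / c - R x) / Real.log 2 := by
      intro x _
      rcases eq_or_lt_of_le (hR0 x) with h0 | hRx
      · rw [← h0]
        simp only [mul_zero, zero_mul, sub_zero]
        exact div_nonneg (div_nonneg (hPnn x) hcpos.le) hlog2.le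
      · have hPx : 0 < P x := Real.rpow_pos_of_pos (hpos x hRx) _
        have ht : 0 < P x / (c * R x) := by positivity
        have hle := Real.log_le_sub_one_of_pos ht
        have hmain : R x * Real.log (P x / (c * R x)) ≤ P x / c - R x := by
          calc R x * Real.log (P x / (c * R x))
              ≤ R x * (P x / (c * R x) - 1) :=
                mul_le_mul_of_nonneg_left hle hRx.le
            _ = P x / c - R x := by field_simp
        rw [Real.logb, ← mul_div_assoc]
        gcongr
    calc ∑ x, R x * Real.logb 2 (P x / (c * R x))
        ≤ ∑ x, (P x / c - R x) / Real.log 2 := Finset.sum_le_sum hpt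
      _ = ((∑ x, P x) / c - ∑ x, R x) / Real.log 2 := by
          rw [← Finset.sum_div]
          congr 1
          rw [Finset.sum_sub_distrib, ← Finset.sum_div]
      _ = 0 := by rw [← hc, div_self (ne_of_gt hcpos), hR1]; simp
  -- pointwise identity
  have hid : ∀ x, R x * (1 - Phat x) ^ γ * Real.logb 2 (1 / Phat x)
      + R x * Real.logb 2 (R x) + R x * Real.logb 2 c
      = -(R x * Real.logb 2 (P x / (c * R x))) := by
    intro x
    rcases eq_or_lt_of_le (hR0 x) with h0 | hRx
    · rw [← h0]; ring
    · have hPhx : 0 < Phat x := hpos x hRx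
      have hPx : 0 < P x := Real.rpow_pos_of_pos hPhx _
      have h1 : Real.logb 2 (P x / (c * R x))
          = Real.logb 2 (P x) - (Real.logb 2 c + Real.logb 2 (R x)) := by
        rw [Real.logb_div (ne_of_gt hPx) (by positivity),
          Real.logb_mul (ne_of_gt hcpos) (ne_of_gt hRx)]
      have h2 : Real.logb 2 (P x) = (1 - Phat x) ^ γ * Real.logb 2 (Phat x) := by
        simp only [hPdef, Real.logb, Real.log_rpow hPhx]
        ring
      have h3 : Real.logb 2 (1 / Phat x) = -Real.logb 2 (Phat x) := by
        rw [one_div, Real.logb_inv]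
      rw [h1, h2, h3]; ring
  have hsum := Finset.sum_congr rfl (fun x (_ : x ∈ Finset.univ) => hid x)
  rw [Finset.sum_add_distrib, Finset.sum_add_distrib, ← Finset.sum_mul, hR1,
    one_mul, Finset.sum_neg_distrib] at hsum
  linarith [key, hsum]
end
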